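/- arXiv:2211.13071 — 3 statements merged into one kernel-verified Lean document; each statement's English description precedes it below -/
import Mathlib

section
/- Let G be a groupoid, R an associative (possibly non-unital) ring, and α = (D_g, α_g)_{g∈G} a partial action of G on R such that D_g is s-unital for every g ∈ G and R = ⊕_{e∈G₀} D_e. Then D_g is a two-sided ideal of R for every g ∈ G. -/
open scoped Classical

/-- A (discrete) groupoid, presented as its set of morphisms `G`, with source map `s`,
range map `r`, inversion `inv` and a partially defined multiplication `mul`.
The units (identity morphisms, i.e. the objects) are the elements `e` with `r e = e`. -/
structure DGroupoid (G : Type*) where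
  s : G → G
  r : G → G
  inv : G → G
  mul : (g h : G) → s g = r h → G
  s_inv : ∀ g, s (inv g) = r g
  r_inv : ∀ g, r (inv g) = s g
  inv_inv : ∀ g, inv (inv g) = g
  r_mul : ∀ g h (p : s g = r h), r (mul g h p) = r g
  s_mul : ∀ g h (p : s g = r h), s (mul g h p) = s h
  r_idem : ∀ g, r (r g) = r g
  s_of_r : ∀ g, s (r g) = r g
  r_of_s : ∀ g, r (s g) = s g
  s_idem : ∀ g, s (s g) = s g
  assoc : ∀ g h k (p : s g = r h) (q : s h = r k) (pq : s (mul g h p) = r k)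
      (qp : s g = r (mul h k q)), mul (mul g h p) k pq = mul g (mul h k q) qp
  id_mul : ∀ g (p : s (r g) = r g), mul (r g) g p = g
  mul_id : ∀ g (p : s g = r (s g)), mul g (s g) p = g
  mul_inv : ∀ g (p : s g = r (inv g)), mul g (inv g) p = r g
  inv_mul : ∀ g (p : s (inv g) = r g), mul (inv g) g p = s g

namespace DGroupoid

/-- `e` is a unit (an object, identified with its identity morphism) of the groupoid. -/
def unit {G : Type*} (𝔾 : DGroupoid G) (e : G) : Prop := 𝔾.r e = e

end DGroupoid

section RingDefs

variable {R : Type*} [NonUnitalRing R]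

/-- A subset of a (possibly non-unital) ring is a two-sided ideal. -/
def IsRingIdeal (J : Set R) : Prop :=
  (0 : R) ∈ J ∧ (∀ x ∈ J, ∀ y ∈ J, x + y ∈ J) ∧ (∀ x ∈ J, -x ∈ J) ∧
    ∀ x ∈ J, ∀ y : R, x * y ∈ J ∧ y * x ∈ J

/-- A subset of a ring, viewed as a ring, is s-unital: every `x` in it lies in
`xT ∩ Tx`. -/
def IsSUnitalSet (J : Set R) : Prop :=
  ∀ x ∈ J, (∃ u ∈ J, x * u = x) ∧ (∃ v ∈ J, v * x = x)

end RingDefs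

/-- A partial action `α = (D_g, α_g)_{g ∈ G}` of a groupoid `𝔾` on a
(possibly non-unital, associative) ring `R`:  each `D_{r g}` is a two-sided ideal of `R`,
each `D_g` is a two-sided ideal of `D_{r g}`, and `α_g = act g` restricts to a ring
isomorphism `D_{g⁻¹} → D_g` (the function `act g` is arbitrary outside `D_{g⁻¹}`),
satisfying the axioms of a partial action. -/
structure PartialAction {G : Type*} (𝔾 : DGroupoid G) (R : Type*) [NonUnitalRing R] where
  D : G → Set R
  zero_mem : ∀ g, (0 : R) ∈ D g
  add_mem : ∀ g, ∀ x ∈ D g, ∀ y ∈ D g, x + y ∈ D g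
  neg_mem : ∀ g, ∀ x ∈ D g, -x ∈ D g
  subset_r : ∀ g, D g ⊆ D (𝔾.r g)
  idealR : ∀ g, IsRingIdeal (D (𝔾.r g))
  idealInR : ∀ g, ∀ x ∈ D g, ∀ y ∈ D (𝔾.r g), x * y ∈ D g ∧ y * x ∈ D g
  act : G → R → R
  act_mem : ∀ g, ∀ x ∈ D (𝔾.inv g), act g x ∈ D g
  act_add : ∀ g, ∀ x ∈ D (𝔾.inv g), ∀ y ∈ D (𝔾.inv g), act g (x + y) = act g x + act g y
  act_mul : ∀ g, ∀ x ∈ D (𝔾.inv g), ∀ y ∈ D (𝔾.inv g), act g (x * y) = act g x * act g y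
  act_inv : ∀ g, ∀ x ∈ D (𝔾.inv g), act (𝔾.inv g) (act g x) = x
  act_unit : ∀ e, 𝔾.unit e → ∀ x ∈ D e, act e x = x
  act_comp_mem : ∀ g h (p : 𝔾.s g = 𝔾.r h), ∀ x, x ∈ D (𝔾.inv g) → x ∈ D h →
      act (𝔾.inv h) x ∈ D (𝔾.inv (𝔾.mul g h p))
  act_comp : ∀ g h (p : 𝔾.s g = 𝔾.r h), ∀ x ∈ D (𝔾.inv h), act h x ∈ D (𝔾.inv g) →
      act g (act h x) = act (𝔾.mul g h p) x

namespace PartialAction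

variable {G : Type*} {R : Type*} [NonUnitalRing R] {𝔾 : DGroupoid G} (P : PartialAction 𝔾 R)

/-- `R = ⊕_{e ∈ G₀} D_e`: every element of `R` decomposes as a finite sum of elements
of the `D_e` (`e` a unit), and the decomposition is unique (a finite sum of elements of
the distinct `D_e`'s which vanishes has all terms zero). -/
def directSum : Prop :=
  (∀ x : R, ∃ f : G →₀ R, (∀ g ∈ f.support, 𝔾.unit g) ∧ (∀ g, f g ∈ P.D g) ∧
      (f.sum fun _ v => v) = x) ∧
    ∀ f : G →₀ R, (∀ g ∈ f.support, 𝔾.unit g) → (∀ g, f g ∈ P.D g) →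
      (f.sum fun _ v => v) = 0 → f = 0

/-- The carrier of the partial skew groupoid ring `R ⋊_α G`: finitely supported
functions `a : G →₀ R` (thought of as `Σ_g a_g δ_g`) with `a g ∈ D g`. -/
def carrier : Set (G →₀ R) := {a | ∀ g, a g ∈ P.D g}

/-- The multiplication of the partial skew groupoid ring:
`(a_g δ_g)(b_h δ_h) = α_g(α_{g⁻¹}(a_g) b_h) δ_{gh}` when `(g,h)` is composable,
and `0` otherwise. -/
noncomputable def skewMul (a b : G →₀ R) : G →₀ R :=
  a.support.sum fun g => b.support.sum fun h =>
    if p : 𝔾.s g = 𝔾.r h then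
      Finsupp.single (𝔾.mul g h p) (P.act g (P.act (𝔾.inv g) (a g) * b h))
    else 0

/-- The subset `⊕_{e ∈ G₀} D_e δ_e` of `R ⋊_α G`: elements supported on units. -/
def diag : Set (G →₀ R) := {a | (∀ g, a g ∈ P.D g) ∧ ∀ g ∈ a.support, 𝔾.unit g}

/-- `I` is a two-sided ideal of the partial skew groupoid ring `R ⋊_α G`. -/
def IsSkewIdeal (I : Set (G →₀ R)) : Prop :=
  I ⊆ P.carrier ∧ (0 : G →₀ R) ∈ I ∧ (∀ x ∈ I, ∀ y ∈ I, x + y ∈ I) ∧ (∀ x ∈ I, -x ∈ I) ∧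
    ∀ x ∈ I, ∀ y ∈ P.carrier, P.skewMul x y ∈ I ∧ P.skewMul y x ∈ I

/-- The projection `P₀ : R ⋊_α G → R`, `Σ_g a_g δ_g ↦ Σ_{e ∈ G₀} a_e`. -/
noncomputable def P0 (_P : PartialAction 𝔾 R) (a : G →₀ R) : R :=
  a.sum fun g v => if 𝔾.unit g then v else 0

/-- An ideal `I` of `R ⋊_α G` is `G`-graded if it is generated by its homogeneous
components, i.e. `I = ⊕_g (I ∩ D_g δ_g)`. -/
def IsGradedIdeal (I : Set (G →₀ R)) : Prop :=
  P.IsSkewIdeal I ∧ ∀ a ∈ I, ∀ g : G, Finsupp.single g (a g) ∈ I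

/-- `J` is a `G`-invariant (two-sided) ideal of `R`: `α_g(D_{g⁻¹} ∩ J) ⊆ J`. -/
def IsInvIdeal (J : Set R) : Prop :=
  IsRingIdeal J ∧ ∀ g, ∀ x ∈ P.D (𝔾.inv g) ∩ J, P.act g x ∈ J

/-- The subset `J ⋊_{α^J} G = ⊕_g (J ∩ D_g) δ_g` of `R ⋊_α G` attached to a
`G`-invariant ideal `J` of `R`. -/
def skewOf (J : Set R) : Set (G →₀ R) := {a | ∀ g, a g ∈ P.D g ∩ J}

/-- `⊕_{e ∈ G₀} D_e δ_e` is a maximal commutative subring of `R ⋊_α G`: it is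
commutative and coincides with its centralizer. -/
def IsMaxCommDiag : Prop :=
  (∀ a ∈ P.diag, ∀ b ∈ P.diag, P.skewMul a b = P.skewMul b a) ∧
    ∀ b ∈ P.carrier, (∀ a ∈ P.diag, P.skewMul a b = P.skewMul b a) → b ∈ P.diag

/-- The partial action has the intersection property: every nonzero ideal of
`R ⋊_α G` intersects `⊕_{e ∈ G₀} D_e δ_e` nontrivially. -/
def HasIntersectionProperty : Prop :=
  ∀ I : Set (G →₀ R), P.IsSkewIdeal I → I ≠ {0} → I ∩ P.diag ≠ {0}

/-- `R` is `G`-simple: the only `G`-invariant ideals of `R` are `{0}` and `R`. -/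
def GSimple : Prop := ∀ J : Set R, P.IsInvIdeal J → J = {0} ∨ J = Set.univ

/-- `R` is `G`-prime: if `I, J` are `G`-invariant ideals with `IJ = {0}`, then
`I = {0}` or `J = {0}`. -/
def GPrime : Prop :=
  ∀ I J : Set R, P.IsInvIdeal I → P.IsInvIdeal J →
    (∀ x ∈ I, ∀ y ∈ J, x * y = 0) → I = {0} ∨ J = {0}

/-- `R ⋊_α G` is graded simple. -/
def GradedSimple : Prop :=
  ∀ I : Set (G →₀ R), P.IsGradedIdeal I → I = {0} ∨ I = P.carrier

/-- `R ⋊_α G` is graded prime. -/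
def GradedPrime : Prop :=
  ∀ I J : Set (G →₀ R), P.IsGradedIdeal I → P.IsGradedIdeal J →
    (∀ x ∈ I, ∀ y ∈ J, P.skewMul x y = 0) → I = {0} ∨ J = {0}

/-- `R ⋊_α G` is a prime ring. -/
def SkewPrime : Prop :=
  ∀ I J : Set (G →₀ R), P.IsSkewIdeal I → P.IsSkewIdeal J →
    (∀ x ∈ I, ∀ y ∈ J, P.skewMul x y = 0) → I = {0} ∨ J = {0}

/-- `R ⋊_α G` is a simple ring. -/
def SkewSimple : Prop :=
  ∀ I : Set (G →₀ R), P.IsSkewIdeal I → I = {0} ∨ I = P.carrier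

end PartialAction

/-- If `α = (D_g, α_g)` is a partial action of a groupoid `𝔾` on a ring
`R` with each `D_g` s-unital and `R = ⊕_{e ∈ G₀} D_e`, then each `D_g` is a two-sided
ideal of `R`. -/
theorem partialAction_D_isRingIdeal {G R : Type*} [NonUnitalRing R]
    (𝔾 : DGroupoid G) (P : PartialAction 𝔾 R)
    (hsu : ∀ g, IsSUnitalSet (P.D g)) (hds : P.directSum) :
    ∀ g : G, IsRingIdeal (P.D g) := by
  intro g
  refine ⟨P.zero_mem g, P.add_mem g, P.neg_mem g, ?_⟩
  intro x hx y
  obtain ⟨⟨u, hu, hxu⟩, ⟨v, hv, hvx⟩⟩ := hsu g x hx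
  constructor
  · have huy : u * y ∈ P.D (𝔾.r g) := ((P.idealR g).2.2.2 u (P.subset_r g hu) y).1
    have h := (P.idealInR g x hx (u * y) huy).1
    rwa [← mul_assoc, hxu] at h
  · have hyv : y * v ∈ P.D (𝔾.r g) := ((P.idealR g).2.2.2 v (P.subset_r g hv) y).2
    have h := (P.idealInR g x hx (y * v) hyv).2
    rwa [mul_assoc, hvx] at h
end

section
/- Let G be a groupoid, R an associative ring, and α = (D_g, α_g)_{g∈G} a partial action of G on R such that D_g is s-unital for every g ∈ G and R = ⊕_{e∈G₀} D_e. If I is a two-sided ideal of the partial skew groupoid ring R ⋊_α G, then P₀(I) is a G-invariant ideal of R. -/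
open scoped Classical

section Aux

variable {G : Type*}

theorem DGroupoid.mul_congr (𝔾 : DGroupoid G) {g g' h h' : G} (hg : g = g') (hh : h = h')
    (p : 𝔾.s g = 𝔾.r h) (p' : 𝔾.s g' = 𝔾.r h') : 𝔾.mul g h p = 𝔾.mul g' h' p' := by
  subst hg; subst hh; rfl

theorem DGroupoid.s_unit (𝔾 : DGroupoid G) {e : G} (he : 𝔾.unit e) : 𝔾.s e = e := by
  have he' : 𝔾.r e = e := he
  conv_lhs => rw [← he']
  rw [𝔾.s_of_r]; exact he'

theorem DGroupoid.unit_r (𝔾 : DGroupoid G) (g : G) : 𝔾.unit (𝔾.r g) := 𝔾.r_idem g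

theorem DGroupoid.unit_s (𝔾 : DGroupoid G) (g : G) : 𝔾.unit (𝔾.s g) := 𝔾.r_of_s g

theorem DGroupoid.inv_unit_eq (𝔾 : DGroupoid G) {e : G} (he : 𝔾.unit e) : 𝔾.inv e = e := by
  have he' : 𝔾.r e = e := he
  have hri : 𝔾.r (𝔾.inv e) = e := (𝔾.r_inv e).trans (𝔾.s_unit he)
  have p : 𝔾.s e = 𝔾.r (𝔾.inv e) := (𝔾.s_unit he).trans hri.symm
  have p2 : 𝔾.s (𝔾.r (𝔾.inv e)) = 𝔾.r (𝔾.inv e) := 𝔾.s_of_r _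
  have h2 := 𝔾.id_mul (𝔾.inv e) p2
  have h3 : 𝔾.mul e (𝔾.inv e) p = 𝔾.mul (𝔾.r (𝔾.inv e)) (𝔾.inv e) p2 :=
    𝔾.mul_congr hri.symm rfl _ _
  have h4 := 𝔾.mul_inv e p
  rw [← h2, ← h3, h4, he']

theorem DGroupoid.unit_of_unit_inv (𝔾 : DGroupoid G) {g : G} (h : 𝔾.unit (𝔾.inv g)) :
    𝔾.unit g := by
  have : g = 𝔾.inv g := (𝔾.inv_inv g).symm.trans (𝔾.inv_unit_eq h)
  rw [this]; exact h

theorem DGroupoid.inv_mul_cancel' (𝔾 : DGroupoid G) (g h : G) (p : 𝔾.s g = 𝔾.r h)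
    (q : 𝔾.s (𝔾.inv g) = 𝔾.r (𝔾.mul g h p)) :
    𝔾.mul (𝔾.inv g) (𝔾.mul g h p) q = h := by
  have q0 : 𝔾.s (𝔾.inv g) = 𝔾.r g := 𝔾.s_inv g
  have pq : 𝔾.s (𝔾.mul (𝔾.inv g) g q0) = 𝔾.r h := by rw [𝔾.s_mul]; exact p
  rw [← 𝔾.assoc (𝔾.inv g) g h q0 p pq q]
  have e1 : 𝔾.mul (𝔾.inv g) g q0 = 𝔾.s g := 𝔾.inv_mul g q0
  rw [𝔾.mul_congr (e1.trans p) rfl pq (𝔾.s_of_r h)]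
  exact 𝔾.id_mul h _

theorem DGroupoid.eq_inv_of_unit_mul (𝔾 : DGroupoid G) {g h : G} (p : 𝔾.s g = 𝔾.r h)
    (hu : 𝔾.unit (𝔾.mul g h p)) : h = 𝔾.inv g := by
  have hu' : 𝔾.r (𝔾.mul g h p) = 𝔾.mul g h p := hu
  have hm : 𝔾.mul g h p = 𝔾.r g := hu'.symm.trans (𝔾.r_mul g h p)
  have q : 𝔾.s (𝔾.inv g) = 𝔾.r (𝔾.mul g h p) := (𝔾.s_inv g).trans (𝔾.r_mul g h p).symm
  have pr : 𝔾.s (𝔾.inv g) = 𝔾.r (𝔾.r g) := (𝔾.s_inv g).trans (𝔾.r_idem g).symm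
  have pr2 : 𝔾.s (𝔾.inv g) = 𝔾.r (𝔾.s (𝔾.inv g)) := (𝔾.r_of_s (𝔾.inv g)).symm
  rw [(𝔾.inv_mul_cancel' g h p q).symm, 𝔾.mul_congr rfl hm q pr,
    𝔾.mul_congr rfl (𝔾.s_inv g).symm pr pr2]
  exact 𝔾.mul_id (𝔾.inv g) pr2

theorem DGroupoid.eq_s_of_mul_eq (𝔾 : DGroupoid G) {g h : G} (p : 𝔾.s g = 𝔾.r h)
    (hm : 𝔾.mul g h p = g) : h = 𝔾.s g := by
  have q : 𝔾.s (𝔾.inv g) = 𝔾.r (𝔾.mul g h p) := (𝔾.s_inv g).trans (𝔾.r_mul g h p).symm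
  rw [(𝔾.inv_mul_cancel' g h p q).symm, 𝔾.mul_congr rfl hm q (𝔾.s_inv g)]
  exact 𝔾.inv_mul g _

end Aux

namespace PartialAction

variable {G R : Type*} [NonUnitalRing R] {𝔾 : DGroupoid G} (P : PartialAction 𝔾 R)

theorem act_zero (g : G) : P.act g 0 = 0 := by
  have h := P.act_add g 0 (P.zero_mem _) 0 (P.zero_mem _)
  rw [add_zero] at h
  have h2 : P.act g 0 + 0 = P.act g 0 + P.act g 0 := by rw [add_zero]; exact h
  exact (add_left_cancel h2).symm

theorem P0_zero : P.P0 (0 : G →₀ R) = 0 := by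
  simp [PartialAction.P0]

theorem P0_add (a b : G →₀ R) : P.P0 (a + b) = P.P0 a + P.P0 b := by
  unfold PartialAction.P0
  exact Finsupp.sum_add_index' (fun _ => by simp) (fun g b₁ b₂ => by split_ifs <;> simp)

theorem P0_single (k : G) (v : R) : P.P0 (Finsupp.single k v) = if 𝔾.unit k then v else 0 := by
  unfold PartialAction.P0
  exact Finsupp.sum_single_index (by simp)

theorem P0_sum {ι : Type*} (S : Finset ι) (f : ι → (G →₀ R)) :
    P.P0 (∑ i ∈ S, f i) = ∑ i ∈ S, P.P0 (f i) := by
  classical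
  induction S using Finset.cons_induction with
  | empty => simp [P0_zero]
  | cons i S hi ih => rw [Finset.sum_cons, Finset.sum_cons, P0_add, ih]

/-- If the sum `R = ⊕ D_e` is direct, then `D_e ∩ D_{e'} = 0` for distinct units. -/
theorem mem_unit_inter_eq_zero (hds : P.directSum) {e e' : G} (he : 𝔾.unit e)
    (he' : 𝔾.unit e') (hne : e ≠ e') {x : R} (hx : x ∈ P.D e) (hx' : x ∈ P.D e') :
    x = 0 := by
  classical
  set f : G →₀ R := Finsupp.single e x + Finsupp.single e' (-x) with hf
  have hfe : f e = x := by
    simp [hf, Finsupp.single_apply, hne, Ne.symm hne]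
  have h1 : ∀ g ∈ f.support, 𝔾.unit g := by
    intro g hg
    have := Finsupp.support_add hg
    rcases Finset.mem_union.mp this with h | h
    · have := Finsupp.support_single_subset h
      rw [Finset.mem_singleton.mp this]; exact he
    · have := Finsupp.support_single_subset h
      rw [Finset.mem_singleton.mp this]; exact he'
  have h2 : ∀ g, f g ∈ P.D g := by
    intro g
    by_cases hg : g = e
    · subst hg; rw [hfe]; exact hx
    · by_cases hg' : g = e'
      · subst hg'
        have : f g = -x := by simp [hf, Finsupp.single_apply, Ne.symm hg]
        rw [this]; exact P.neg_mem _ _ hx'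
      · have : f g = 0 := by
          simp [hf, Finsupp.single_apply, Ne.symm hg, Ne.symm hg']
        rw [this]; exact P.zero_mem _
  have h3 : (f.sum fun _ v => v) = 0 := by
    rw [hf, Finsupp.sum_add_index' (fun _ => rfl) (fun _ _ _ => rfl),
      Finsupp.sum_single_index rfl, Finsupp.sum_single_index rfl, add_neg_cancel]
  have := hds.2 f h1 h2 h3
  rw [this] at hfe
  exact hfe.symm

theorem single_mem_carrier {g : G} {u : R} (hu : u ∈ P.D g) :
    Finsupp.single g u ∈ P.carrier := by
  intro h
  rw [Finsupp.single_apply]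
  split_ifs with hh
  · subst hh; exact hu
  · exact P.zero_mem _

/-- Master formula for `P₀` of a product in the skew groupoid ring. -/
theorem P0_skewMul (c d : G →₀ R) :
    P.P0 (P.skewMul c d) =
      ∑ g ∈ c.support, P.act g (P.act (𝔾.inv g) (c g) * d (𝔾.inv g)) := by
  classical
  unfold PartialAction.skewMul
  rw [P0_sum]
  refine Finset.sum_congr rfl fun g _ => ?_
  rw [P0_sum]
  have key : ∀ h : G,
      P.P0 (if p : 𝔾.s g = 𝔾.r h then
          Finsupp.single (𝔾.mul g h p) (P.act g (P.act (𝔾.inv g) (c g) * d h)) else 0) =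
        if h = 𝔾.inv g then P.act g (P.act (𝔾.inv g) (c g) * d h) else 0 := by
    intro h
    by_cases p : 𝔾.s g = 𝔾.r h
    · rw [dif_pos p, P0_single]
      by_cases heq : h = 𝔾.inv g
      · subst heq
        have hm : 𝔾.mul g (𝔾.inv g) p = 𝔾.r g := 𝔾.mul_inv g p
        have hun : 𝔾.unit (𝔾.mul g (𝔾.inv g) p) := by rw [hm]; exact 𝔾.unit_r g
        rw [if_pos hun, if_pos rfl]
      · have hnu : ¬ 𝔾.unit (𝔾.mul g h p) := fun hu => heq (𝔾.eq_inv_of_unit_mul p hu)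
        rw [if_neg hnu, if_neg heq]
    · rw [dif_neg p, P0_zero]
      by_cases heq : h = 𝔾.inv g
      · exact absurd (by rw [heq]; exact (𝔾.r_inv g).symm) p
      · rw [if_neg heq]
  calc (∑ h ∈ d.support,
        P.P0 (if p : 𝔾.s g = 𝔾.r h then
          Finsupp.single (𝔾.mul g h p) (P.act g (P.act (𝔾.inv g) (c g) * d h)) else 0))
      = ∑ h ∈ d.support,
          if h = 𝔾.inv g then P.act g (P.act (𝔾.inv g) (c g) * d h) else 0 :=
        Finset.sum_congr rfl fun h _ => key h
    _ = if 𝔾.inv g ∈ d.support then P.act g (P.act (𝔾.inv g) (c g) * d (𝔾.inv g)) else 0 :=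
        Finset.sum_ite_eq' d.support (𝔾.inv g) _
    _ = P.act g (P.act (𝔾.inv g) (c g) * d (𝔾.inv g)) := by
        split_ifs with h
        · rfl
        · rw [Finsupp.notMem_support_iff.mp h, mul_zero, P.act_zero]

/-- The `g` component of `(u δ_g) · a`. -/
theorem skewMul_single_left_apply (g : G) (u : R) (a : G →₀ R) :
    (P.skewMul (Finsupp.single g u) a) g = P.act g (P.act (𝔾.inv g) u * a (𝔾.s g)) := by
  classical
  by_cases hu : u = 0
  · subst hu
    rw [P.act_zero, zero_mul, P.act_zero]
    unfold PartialAction.skewMul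
    simp
  · unfold PartialAction.skewMul
    rw [Finsupp.support_single_ne_zero g hu, Finset.sum_singleton, Finsupp.single_eq_same,
      Finset.sum_apply']
    have key : ∀ h : G,
        (if p : 𝔾.s g = 𝔾.r h then
            Finsupp.single (𝔾.mul g h p) (P.act g (P.act (𝔾.inv g) u * a h)) else 0) g =
          if h = 𝔾.s g then P.act g (P.act (𝔾.inv g) u * a h) else 0 := by
      intro h
      by_cases p : 𝔾.s g = 𝔾.r h
      · rw [dif_pos p, Finsupp.single_apply]
        by_cases heq : h = 𝔾.s g
        · subst heq
          have hm : 𝔾.mul g (𝔾.s g) p = g := 𝔾.mul_id g p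
          rw [if_pos hm, if_pos rfl]
        · have hnm : ¬ 𝔾.mul g h p = g := fun hm => heq (𝔾.eq_s_of_mul_eq p hm)
          rw [if_neg hnm, if_neg heq]
      · rw [dif_neg p]
        by_cases heq : h = 𝔾.s g
        · exact absurd (by rw [heq]; exact (𝔾.r_of_s g).symm) p
        · rw [if_neg heq]; rfl
    calc (∑ h ∈ a.support,
          (if p : 𝔾.s g = 𝔾.r h then
            Finsupp.single (𝔾.mul g h p) (P.act g (P.act (𝔾.inv g) u * a h)) else 0) g)
        = ∑ h ∈ a.support, if h = 𝔾.s g then P.act g (P.act (𝔾.inv g) u * a h) else 0 :=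
          Finset.sum_congr rfl fun h _ => key h
      _ = if 𝔾.s g ∈ a.support then P.act g (P.act (𝔾.inv g) u * a (𝔾.s g)) else 0 :=
          Finset.sum_ite_eq' a.support (𝔾.s g) _
      _ = P.act g (P.act (𝔾.inv g) u * a (𝔾.s g)) := by
          split_ifs with h
          · rfl
          · rw [Finsupp.notMem_support_iff.mp h, mul_zero, P.act_zero]

/-- `P₀` of a product with `w δ_{g⁻¹}` on the right. -/
theorem P0_skewMul_single_inv (c : G →₀ R) (g : G) (w : R) :
    P.P0 (P.skewMul c (Finsupp.single (𝔾.inv g) w)) =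
      P.act g (P.act (𝔾.inv g) (c g) * w) := by
  classical
  rw [P0_skewMul]
  rw [Finset.sum_eq_single g]
  · rw [Finsupp.single_eq_same]
  · intro g' _ hne
    have hni : ¬ 𝔾.inv g = 𝔾.inv g' := fun h =>
      hne ((𝔾.inv_inv g').symm.trans ((congrArg 𝔾.inv h.symm).trans (𝔾.inv_inv g)))
    rw [Finsupp.single_apply, if_neg hni, mul_zero, P.act_zero]
  · intro hg
    rw [Finsupp.notMem_support_iff.mp hg, P.act_zero, zero_mul, P.act_zero]

end PartialAction


namespace PartialAction

variable {G R : Type*} [NonUnitalRing R] {𝔾 : DGroupoid G} (P : PartialAction 𝔾 R)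

theorem P0_skewMul_diag_right (hds : P.directSum) (a f : G →₀ R) (haD : ∀ g, a g ∈ P.D g)
    (hfu : ∀ g ∈ f.support, 𝔾.unit g) (hfD : ∀ g, f g ∈ P.D g) :
    P.P0 (P.skewMul a f) = P.P0 a * (f.sum fun _ v => v) := by
  classical
  rw [P0_skewMul]
  have hrw : P.P0 a * (f.sum fun _ v => v)
      = ∑ g ∈ a.support, (if 𝔾.unit g then a g else 0) * (f.sum fun _ v => v) := by
    rw [← Finset.sum_mul]; rfl
  rw [hrw]
  refine Finset.sum_congr rfl fun g hg => ?_
  by_cases hu : 𝔾.unit g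
  · rw [if_pos hu]
    have hinv : 𝔾.inv g = g := 𝔾.inv_unit_eq hu
    have hDg : IsRingIdeal (P.D g) := by
      have h := P.idealR g; rwa [show 𝔾.r g = g from hu] at h
    rw [hinv, P.act_unit g hu (a g) (haD g)]
    have hm : a g * f g ∈ P.D g := (hDg.2.2.2 (a g) (haD g) (f g)).1
    rw [P.act_unit g hu _ hm]
    rw [show (f.sum fun _ v => v) = ∑ h ∈ f.support, f h from rfl, Finset.mul_sum]
    symm
    refine Finset.sum_eq_single g ?_ ?_
    · intro h hh hne
      have hhu := hfu h hh
      have hm1 : a g * f h ∈ P.D g := (hDg.2.2.2 (a g) (haD g) (f h)).1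
      have hDh : IsRingIdeal (P.D h) := by
        have h2 := P.idealR h; rwa [show 𝔾.r h = h from hhu] at h2
      have hm2 : a g * f h ∈ P.D h := (hDh.2.2.2 (f h) (hfD h) (a g)).2
      exact P.mem_unit_inter_eq_zero hds hu hhu (fun e => hne e.symm) hm1 hm2
    · intro hgf
      rw [Finsupp.notMem_support_iff.mp hgf, mul_zero]
  · rw [if_neg hu, zero_mul]
    have hf0 : f (𝔾.inv g) = 0 := by
      by_contra hne
      exact hu (𝔾.unit_of_unit_inv (hfu _ (Finsupp.mem_support_iff.mpr hne)))
    rw [hf0, mul_zero, P.act_zero]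

theorem P0_skewMul_diag_left (hds : P.directSum) (a f : G →₀ R) (haD : ∀ g, a g ∈ P.D g)
    (hfu : ∀ g ∈ f.support, 𝔾.unit g) (hfD : ∀ g, f g ∈ P.D g) :
    P.P0 (P.skewMul f a) = (f.sum fun _ v => v) * P.P0 a := by
  classical
  rw [P0_skewMul]
  have hrw : (f.sum fun _ v => v) * P.P0 a = ∑ g ∈ f.support, f g * P.P0 a := by
    rw [show (f.sum fun _ v => v) = ∑ h ∈ f.support, f h from rfl, Finset.sum_mul]
  rw [hrw]
  refine Finset.sum_congr rfl fun g hg => ?_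
  have hu := hfu g hg
  have hinv : 𝔾.inv g = g := 𝔾.inv_unit_eq hu
  have hDg : IsRingIdeal (P.D g) := by
    have h := P.idealR g; rwa [show 𝔾.r g = g from hu] at h
  rw [hinv, P.act_unit g hu (f g) (hfD g)]
  have hm : f g * a g ∈ P.D g := (hDg.2.2.2 (f g) (hfD g) (a g)).1
  rw [P.act_unit g hu _ hm]
  rw [show P.P0 a = ∑ h ∈ a.support, (if 𝔾.unit h then a h else 0) from rfl, Finset.mul_sum]
  have h0 : ∀ h ∈ a.support, h ≠ g → f g * (if 𝔾.unit h then a h else 0) = 0 := by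
    intro h hh hne
    by_cases hhu : 𝔾.unit h
    · rw [if_pos hhu]
      have hm1 : f g * a h ∈ P.D g := (hDg.2.2.2 (f g) (hfD g) (a h)).1
      have hDh : IsRingIdeal (P.D h) := by
        have h2 := P.idealR h; rwa [show 𝔾.r h = h from hhu] at h2
      have hm2 : f g * a h ∈ P.D h := (hDh.2.2.2 (a h) (haD h) (f g)).2
      exact P.mem_unit_inter_eq_zero hds hu hhu (fun e => hne e.symm) hm1 hm2
    · rw [if_neg hhu, mul_zero]
  have h1 : g ∉ a.support → f g * (if 𝔾.unit g then a g else 0) = 0 := by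
    intro hga
    rw [if_pos hu, Finsupp.notMem_support_iff.mp hga, mul_zero]
  symm
  rw [Finset.sum_eq_single g h0 h1, if_pos hu]

end PartialAction

/-- If `I` is a two-sided ideal of the partial skew groupoid ring
`R ⋊_α G`, then `P₀(I)` is a `G`-invariant ideal of `R`. -/
theorem P0_image_isInvIdeal {G R : Type*} [NonUnitalRing R]
    (𝔾 : DGroupoid G) (P : PartialAction 𝔾 R)
    (hsu : ∀ g, IsSUnitalSet (P.D g)) (hds : P.directSum)
    (I : Set (G →₀ R)) (hI : P.IsSkewIdeal I) :
    P.IsInvIdeal (P.P0 '' I) := by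
  classical
  obtain ⟨hIc, hI0, hIadd, hIneg, hImul⟩ := hI
  have hmem : ∀ a ∈ I, ∀ g, a g ∈ P.D g := fun a ha => hIc ha
  constructor
  · refine ⟨⟨0, hI0, P.P0_zero⟩, ?_, ?_, ?_⟩
    · rintro x ⟨a, ha, rfl⟩ y ⟨b, hb, rfl⟩
      exact ⟨a + b, hIadd a ha b hb, P.P0_add a b⟩
    · rintro x ⟨a, ha, rfl⟩
      refine ⟨-a, hIneg a ha, ?_⟩
      have h : P.P0 a + P.P0 (-a) = 0 := by rw [← P.P0_add, add_neg_cancel, P.P0_zero]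
      exact (neg_eq_of_add_eq_zero_right h).symm
    · rintro x ⟨a, ha, rfl⟩ y
      obtain ⟨f, hfu, hfD, hfs⟩ := hds.1 y
      have hfc : f ∈ P.carrier := hfD
      constructor
      · refine ⟨P.skewMul a f, (hImul a ha f hfc).1, ?_⟩
        rw [P.P0_skewMul_diag_right hds a f (hmem a ha) hfu hfD, hfs]
      · refine ⟨P.skewMul f a, (hImul a ha f hfc).2, ?_⟩
        rw [P.P0_skewMul_diag_left hds a f (hmem a ha) hfu hfD, hfs]
  · intro g x hx
    obtain ⟨hxD, a, ha, rfl⟩ := hx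
    have hax : P.act g (P.P0 a) ∈ P.D g := P.act_mem g (P.P0 a) hxD
    obtain ⟨⟨w, hwD, hwEq⟩, -⟩ := hsu (𝔾.inv g) (P.P0 a) hxD
    obtain ⟨-, u, huD, huEq⟩ := hsu g (P.act g (P.P0 a)) hax
    have hucar : Finsupp.single g u ∈ P.carrier := P.single_mem_carrier huD
    have hwcar : Finsupp.single (𝔾.inv g) w ∈ P.carrier := P.single_mem_carrier hwD
    refine ⟨P.skewMul (P.skewMul (Finsupp.single g u) a) (Finsupp.single (𝔾.inv g) w),
      (hImul _ ((hImul a ha _ hucar).2) _ hwcar).1, ?_⟩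
    rw [P.P0_skewMul_single_inv, P.skewMul_single_left_apply]
    have huu : u ∈ P.D (𝔾.inv (𝔾.inv g)) := by rw [𝔾.inv_inv]; exact huD
    have hzD : P.act (𝔾.inv g) u ∈ P.D (𝔾.inv g) := P.act_mem (𝔾.inv g) u huu
    have hasg : a (𝔾.s g) ∈ P.D (𝔾.r (𝔾.inv g)) := by rw [𝔾.r_inv]; exact hmem a ha (𝔾.s g)
    have hzmul : P.act (𝔾.inv g) u * a (𝔾.s g) ∈ P.D (𝔾.inv g) :=
      (P.idealInR (𝔾.inv g) _ hzD _ hasg).1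
    rw [P.act_inv g _ hzmul]
    have hzsg : P.act (𝔾.inv g) u ∈ P.D (𝔾.s g) := by
      have h := P.subset_r (𝔾.inv g) hzD; rwa [𝔾.r_inv] at h
    have hDsg : IsRingIdeal (P.D (𝔾.s g)) := by
      have h := P.idealR (𝔾.inv g); rwa [𝔾.r_inv] at h
    have key1 : P.act (𝔾.inv g) u * P.P0 a = P.act (𝔾.inv g) u * a (𝔾.s g) := by
      rw [show P.P0 a = ∑ h ∈ a.support, (if 𝔾.unit h then a h else 0) from rfl,
        Finset.mul_sum]
      rw [Finset.sum_eq_single (𝔾.s g)]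
      · rw [if_pos (𝔾.unit_s g)]
      · intro h hh hne
        by_cases hhu : 𝔾.unit h
        · rw [if_pos hhu]
          have hm1 : P.act (𝔾.inv g) u * a h ∈ P.D (𝔾.s g) :=
            (hDsg.2.2.2 _ hzsg (a h)).1
          have hDh : IsRingIdeal (P.D h) := by
            have h2 := P.idealR h; rwa [show 𝔾.r h = h from hhu] at h2
          have hm2 : P.act (𝔾.inv g) u * a h ∈ P.D h :=
            (hDh.2.2.2 (a h) (hmem a ha h) _).2
          exact P.mem_unit_inter_eq_zero hds (𝔾.unit_s g) hhu (fun e => hne e.symm) hm1 hm2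
        · rw [if_neg hhu, mul_zero]
      · intro hsg
        rw [if_pos (𝔾.unit_s g), Finsupp.notMem_support_iff.mp hsg, mul_zero]
    rw [← key1]
    have haxx : P.act g (P.P0 a) ∈ P.D (𝔾.inv (𝔾.inv g)) := by rw [𝔾.inv_inv]; exact hax
    have key2 : P.act (𝔾.inv g) u * P.P0 a = P.P0 a := by
      conv_lhs => rw [← P.act_inv g (P.P0 a) hxD]
      rw [← P.act_mul (𝔾.inv g) u huu _ haxx, huEq, P.act_inv g _ hxD]
    rw [key2, hwEq]
end

section
/- Let G be a groupoid, R an associative ring, and α = (D_g, α_g)_{g∈G} a partial action of G on R such that D_g is s-unital for every g ∈ G and R = ⊕_{e∈G₀} D_e. Then: (i) if J is a G-invariant ideal of R, then J ⋊_{α^J} G = ⊕_{g∈G} (J ∩ D_g) δ_g is a G-graded ideal of R ⋊_α G; (ii) if I is a G-graded ideal of R ⋊_α G, then P₀(I ∩ ⊕_{e∈G₀} D_e δ_e) = P₀(I). -/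
open scoped Classical

/-!
In `(a_g δ_g)(b_h δ_h)` the coefficient `α_g(α_{g⁻¹}(a_g) b_h)` lies in `D_{gh}` because on
`D_{g⁻¹} ∩ D_h` the partial action gives `α_g = α_{gh} ∘ α_{h⁻¹}`; if `a_g` or `b_h` lies in
a `G`-invariant ideal `J`, so does the coefficient. Hence `J ⋊ G` is an ideal, graded by
construction. For a graded ideal `I` and `a ∈ I`, the restriction of `a` to the units is a sum
of homogeneous components of `a`, so it lies in `I ∩ ⊕_e D_e δ_e` and has the same `P₀`.
-/

theorem Finsupp.single_apply_mem_of_zero_mem {G M : Type*} [Zero M] {Q : G → Set M}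
    (hQ : ∀ k, (0 : M) ∈ Q k) {g : G} {v : M} (hv : v ∈ Q g) (k : G) :
    Finsupp.single g v k ∈ Q k := by
  rw [Finsupp.single_apply]
  split_ifs with h
  · exact h ▸ hv
  · exact hQ k

namespace PartialAction

variable {G R : Type*} [NonUnitalRing R] {𝔾 : DGroupoid G} (P : PartialAction 𝔾 R)

theorem act_inv_mem {g : G} {x : R} (hx : x ∈ P.D g) : P.act (𝔾.inv g) x ∈ P.D (𝔾.inv g) :=
  P.act_mem _ x (by rwa [𝔾.inv_inv])

theorem mul_mem_D_inv_inter_D {g h : G} (p : 𝔾.s g = 𝔾.r h) {x y : R}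
    (hx : x ∈ P.D (𝔾.inv g)) (hy : y ∈ P.D h) : x * y ∈ P.D (𝔾.inv g) ∩ P.D h := by
  have hr : 𝔾.r (𝔾.inv g) = 𝔾.r h := by rw [𝔾.r_inv, p]
  refine ⟨(P.idealInR _ x hx y ?_).1, (P.idealInR h y hy x ?_).2⟩
  · exact hr ▸ P.subset_r h hy
  · exact hr ▸ P.subset_r _ hx

theorem act_mem_D_mul {g h : G} (p : 𝔾.s g = 𝔾.r h) {z : R}
    (hz : z ∈ P.D (𝔾.inv g) ∩ P.D h) : P.act g z ∈ P.D (𝔾.mul g h p) := by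
  have hz' : z ∈ P.D (𝔾.inv (𝔾.inv h)) := by rw [𝔾.inv_inv]; exact hz.2
  have hback : P.act h (P.act (𝔾.inv h) z) = z := by
    simpa only [𝔾.inv_inv] using P.act_inv (𝔾.inv h) z hz'
  have hcomp : P.act g z = P.act (𝔾.mul g h p) (P.act (𝔾.inv h) z) := by
    have := P.act_comp g h p _ (P.act_mem _ z hz') (by rw [hback]; exact hz.1)
    rwa [hback] at this
  rw [hcomp]
  exact P.act_mem _ _ (P.act_comp_mem g h p z hz.1 hz.2)

theorem skewMul_apply_mem {Q : G → Set R} (hQ0 : ∀ k, (0 : R) ∈ Q k)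
    (hQadd : ∀ k, ∀ x ∈ Q k, ∀ y ∈ Q k, x + y ∈ Q k) {a b : G →₀ R}
    (hab : ∀ g h (p : 𝔾.s g = 𝔾.r h),
      P.act g (P.act (𝔾.inv g) (a g) * b h) ∈ Q (𝔾.mul g h p)) (k : G) :
    P.skewMul a b k ∈ Q k := by
  have hsum : ∀ {ι : Type _} (s : Finset ι) (f : ι → R), (∀ i ∈ s, f i ∈ Q k) →
      ∑ i ∈ s, f i ∈ Q k :=
    fun s f => Finset.sum_induction f (· ∈ Q k) (fun x y hx hy => hQadd k x hx y hy) (hQ0 k)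
  simp only [skewMul, Finsupp.finsetSum_apply]
  refine hsum _ _ fun g _ => hsum _ _ fun h _ => ?_
  split_ifs with p
  · exact Finsupp.single_apply_mem_of_zero_mem hQ0 (hab g h p) k
  · exact hQ0 k

variable {P}

theorem skewOf_subset_carrier (J : Set R) : P.skewOf J ⊆ P.carrier :=
  fun _ ha g => (ha g).1

theorem IsInvIdeal.act_inv_mem {J : Set R} (hJ : P.IsInvIdeal J) {g : G} {x : R}
    (hx : x ∈ P.D g ∩ J) : P.act (𝔾.inv g) x ∈ J :=
  hJ.2 (𝔾.inv g) x ⟨by rw [𝔾.inv_inv]; exact hx.1, hx.2⟩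

theorem IsInvIdeal.skewMul_mem_skewOf {J : Set R} (hJ : P.IsInvIdeal J) {a b : G →₀ R}
    (ha : a ∈ P.carrier) (hb : b ∈ P.carrier)
    (hab : ∀ g h, 𝔾.s g = 𝔾.r h → P.act (𝔾.inv g) (a g) * b h ∈ J) :
    P.skewMul a b ∈ P.skewOf J := by
  refine P.skewMul_apply_mem (Q := fun k => P.D k ∩ J) (fun k => ⟨P.zero_mem k, hJ.1.1⟩)
    (fun k x hx y hy => ⟨P.add_mem k x hx.1 y hy.1, hJ.1.2.1 x hx.2 y hy.2⟩) fun g h p => ?_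
  have hz := P.mul_mem_D_inv_inter_D p (P.act_inv_mem (ha g)) (hb h)
  exact ⟨P.act_mem_D_mul p hz, hJ.2 g _ ⟨hz.1, hab g h p⟩⟩

theorem IsInvIdeal.isGradedIdeal_skewOf {J : Set R} (hJ : P.IsInvIdeal J) :
    P.IsGradedIdeal (P.skewOf J) := by
  have hsub := skewOf_subset_carrier (P := P) J
  refine ⟨⟨hsub, fun g => ⟨P.zero_mem g, hJ.1.1⟩, ?_, ?_, fun a ha b hb => ⟨?_, ?_⟩⟩, ?_⟩
  · intro x hx y hy g
    exact ⟨P.add_mem g _ (hx g).1 _ (hy g).1, hJ.1.2.1 _ (hx g).2 _ (hy g).2⟩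
  · intro x hx g
    exact ⟨P.neg_mem g _ (hx g).1, hJ.1.2.2.1 _ (hx g).2⟩
  · exact hJ.skewMul_mem_skewOf (hsub ha) hb fun g h _ =>
      (hJ.1.2.2.2 _ (hJ.act_inv_mem (ha g)) (b h)).1
  · exact hJ.skewMul_mem_skewOf hb (hsub ha) fun g h _ => (hJ.1.2.2.2 _ (ha h).2 _).2
  · intro a ha g
    exact Finsupp.single_apply_mem_of_zero_mem (Q := fun k => P.D k ∩ J)
      (fun k => ⟨P.zero_mem k, hJ.1.1⟩) (ha g)

theorem IsSkewIdeal.finsetSum_mem {I : Set (G →₀ R)} (hI : P.IsSkewIdeal I) {ι : Type*}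
    (s : Finset ι) (f : ι → G →₀ R) (hf : ∀ i ∈ s, f i ∈ I) : ∑ i ∈ s, f i ∈ I :=
  Finset.sum_induction f (· ∈ I) (fun x y hx hy => hI.2.2.1 x hx y hy) hI.2.1 hf

theorem IsGradedIdeal.filter_mem {I : Set (G →₀ R)} (hI : P.IsGradedIdeal I)
    (p : G → Prop) {a : G →₀ R} (ha : a ∈ I) : a.filter p ∈ I := by
  rw [← Finsupp.sum_single (a.filter p)]
  refine hI.1.finsetSum_mem _ _ fun g hg => ?_
  rw [Finsupp.support_filter, Finset.mem_filter] at hg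
  rw [Finsupp.filter_apply_pos p a hg.2]
  exact hI.2 a ha g

theorem filter_unit_mem_diag {a : G →₀ R} (ha : a ∈ P.carrier) :
    a.filter 𝔾.unit ∈ P.diag := by
  refine ⟨fun g => ?_, fun g hg => ?_⟩
  · rw [Finsupp.filter_apply]
    split_ifs
    exacts [ha g, P.zero_mem g]
  · rw [Finsupp.support_filter, Finset.mem_filter] at hg
    exact hg.2

variable (P) in
theorem P0_filter_unit (a : G →₀ R) : P.P0 (a.filter 𝔾.unit) = P.P0 a := by
  simp only [P0, Finsupp.sum, Finsupp.support_filter, Finset.sum_filter, Finsupp.filter_apply]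
  refine Finset.sum_congr rfl fun g _ => ?_
  split_ifs <;> rfl

theorem IsGradedIdeal.P0_image_inter_diag {I : Set (G →₀ R)} (hI : P.IsGradedIdeal I) :
    P.P0 '' (I ∩ P.diag) = P.P0 '' I := by
  refine (Set.image_mono Set.inter_subset_left).antisymm ?_
  rintro _ ⟨a, ha, rfl⟩
  exact ⟨a.filter 𝔾.unit, ⟨hI.filter_mem _ ha, filter_unit_mem_diag (hI.1.1 ha)⟩,
    P.P0_filter_unit a⟩

end PartialAction

theorem skewOf_isGraded_and_P0_inter_diag_eq_general {G R : Type*} [NonUnitalRing R]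
    (𝔾 : DGroupoid G) (P : PartialAction 𝔾 R) :
    (∀ J : Set R, P.IsInvIdeal J → P.IsGradedIdeal (P.skewOf J)) ∧
      (∀ I : Set (G →₀ R), P.IsGradedIdeal I → P.P0 '' (I ∩ P.diag) = P.P0 '' I) :=
  ⟨fun _ hJ => hJ.isGradedIdeal_skewOf, fun _ hI => hI.P0_image_inter_diag⟩

/-- (i) If `J` is a `G`-invariant ideal of `R`, then
`J ⋊_{α^J} G = ⊕_g (J ∩ D_g) δ_g` is a `G`-graded ideal of `R ⋊_α G`.
(ii) If `I` is a `G`-graded ideal of `R ⋊_α G`, then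
`P₀(I ∩ ⊕_{e ∈ G₀} D_e δ_e) = P₀(I)`. -/
theorem skewOf_isGraded_and_P0_inter_diag_eq {G R : Type*} [NonUnitalRing R]
    (𝔾 : DGroupoid G) (P : PartialAction 𝔾 R)
    (hsu : ∀ g, IsSUnitalSet (P.D g)) (hds : P.directSum) :
    (∀ J : Set R, P.IsInvIdeal J → P.IsGradedIdeal (P.skewOf J)) ∧
      (∀ I : Set (G →₀ R), P.IsGradedIdeal I → P.P0 '' (I ∩ P.diag) = P.P0 '' I) :=
  skewOf_isGraded_and_P0_inter_diag_eq_general 𝔾 P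
end
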